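/- For every n ≥ 1 and every probability distribution p = (p_1, ..., p_n) with p_1 ≥ ... ≥ p_n > 0 and Σ p_i = 1, the guessing entropy satisfies E[G(p)] ≥ (1/e)·2^{H(p) + 2·p_n} + 1/2 - p_n. -/
import Mathlib

/-- Shannon entropy in bits. -/
noncomputable def shannonEntropy {n : ℕ} (p : Fin n → ℝ) : ℝ :=
  -∑ i, p i * Real.logb 2 (p i)

/-- Guessing entropy: expected number of guesses (indices counted from 1). -/
noncomputable def guessingEntropy {n : ℕ} (p : Fin n → ℝ) : ℝ :=
  ∑ i : Fin n, (((i : ℕ) : ℝ) + 1) * p i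

/-- Binary entropy function (in bits). -/
noncomputable def binaryEntropy (α : ℝ) : ℝ :=
  -α * Real.logb 2 α - (1 - α) * Real.logb 2 (1 - α)

/-- Gibbs/Jensen inequality for the logarithm. -/
lemma gibbs_log {n : ℕ} (hn : 0 < n) (w x : Fin n → ℝ) (hw : ∀ i, 0 < w i)
    (hx : ∀ i, 0 < x i) (hsum : ∑ i, w i = 1) :
    ∑ i, w i * Real.log (x i) ≤ Real.log (∑ i, w i * x i) := by
  set S := ∑ i, w i * x i with hS
  have hSpos : 0 < S := by
    refine Finset.sum_pos (fun i _ => mul_pos (hw i) (hx i)) ⟨⟨0, hn⟩, Finset.mem_univ _⟩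
  have key : ∀ i : Fin n, Real.log (x i) ≤ Real.log S + (x i / S - 1) := by
    intro i
    have h1 : Real.log (x i / S) ≤ x i / S - 1 :=
      Real.log_le_sub_one_of_pos (div_pos (hx i) hSpos)
    have h2 : Real.log (x i / S) = Real.log (x i) - Real.log S :=
      Real.log_div (ne_of_gt (hx i)) (ne_of_gt hSpos)
    linarith
  calc ∑ i, w i * Real.log (x i)
      ≤ ∑ i, w i * (Real.log S + (x i / S - 1)) :=
        Finset.sum_le_sum fun i _ => mul_le_mul_of_nonneg_left (key i) (hw i).le
    _ = (∑ i, w i) * Real.log S + (∑ i, w i * x i) / S - (∑ i, w i) := by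
        have e : ∀ i : Fin n, w i * (Real.log S + (x i / S - 1))
            = w i * Real.log S + w i * x i / S - w i := fun i => by ring
        simp only [e, Finset.sum_sub_distrib, Finset.sum_add_distrib, ← Finset.sum_mul,
          ← Finset.sum_div]
    _ = Real.log S := by rw [hsum, ← hS, div_self (ne_of_gt hSpos)]; ring

/-- The key analytic inequality, a divided form of `u ≤ 2 sinh(u/2)`. -/
lemma key_exp_ineq (u : ℝ) (hu : 0 < u) :
    Real.exp (-(u/2)) / (1 - Real.exp (-u)) ≤ 1 / u := by
  have h1r : Real.exp (-u) < 1 := Real.exp_lt_one_iff.mpr (by linarith)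
  have hsinh : u ≤ Real.exp (u/2) - Real.exp (-(u/2)) := by
    have h := (Real.self_lt_sinh_iff (x := u/2)).mpr (by linarith)
    rw [Real.sinh_eq] at h
    linarith
  have e4 : Real.exp (u/2) * Real.exp (-(u/2)) = 1 := by
    rw [← Real.exp_add]; simp
  have e5 : Real.exp (-(u/2)) * Real.exp (-(u/2)) = Real.exp (-u) := by
    rw [← Real.exp_add]; ring_nf
  have h6 : u * Real.exp (-(u/2)) ≤ 1 - Real.exp (-u) := by
    nlinarith [mul_le_mul_of_nonneg_right hsinh (Real.exp_pos (-(u/2))).le]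
  rw [div_le_div_iff₀ (by linarith) hu]
  linarith

theorem refined_rioul_alpha_half (n : ℕ) (hn : 1 ≤ n) (p : Fin n → ℝ)
    (hdesc : ∀ i j : Fin n, i ≤ j → p j ≤ p i)
    (hpos : ∀ i, 0 < p i)
    (hsum : ∑ i, p i = 1) :
    guessingEntropy p ≥
      (1 / Real.exp 1) * (2 : ℝ) ^ (shannonEntropy p + 2 * p ⟨n - 1, by omega⟩) +
        1 / 2 - p ⟨n - 1, by omega⟩ := by
  obtain ⟨m, rfl⟩ : ∃ m, n = m + 1 := ⟨n - 1, (Nat.succ_pred_eq_of_pos hn).symm⟩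
  have hlast : (⟨m + 1 - 1, by omega⟩ : Fin (m + 1)) = Fin.last m := rfl
  rw [hlast]
  set pn := p (Fin.last m) with hpn
  set H := shannonEntropy p with hH
  set G := guessingEntropy p with hG
  have hpn0 : 0 < pn := hpos _
  -- G ≥ 1
  have hG1 : 1 ≤ G := by
    rw [hG, guessingEntropy]
    calc (1:ℝ) = ∑ i, p i := hsum.symm
      _ ≤ ∑ i : Fin (m+1), (((i : ℕ) : ℝ) + 1) * p i := by
          refine Finset.sum_le_sum fun i _ => ?_
          have h01 : (1:ℝ) ≤ ((i : ℕ) : ℝ) + 1 := by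
            linarith [(Nat.cast_nonneg (i : ℕ) : (0:ℝ) ≤ (i : ℕ))]
          calc p i = 1 * p i := (one_mul _).symm
            _ ≤ (((i : ℕ) : ℝ) + 1) * p i := mul_le_mul_of_nonneg_right h01 (hpos i).le
  clear_value pn H G
  set G' := G + pn - 1/2 with hG'def
  have hG'pos : 0 < G' := by simp only [hG'def]; linarith
  set u := 1 / G' with hu
  have hu0 : 0 < u := by positivity
  set r := Real.exp (-u) with hr
  set s := Real.exp (-u/2) with hs
  have hr0 : 0 < r := Real.exp_pos _
  have hs0 : 0 < s := Real.exp_pos _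
  have hr1 : r < 1 := by rw [hr]; exact Real.exp_lt_one_iff.mpr (by linarith)
  have huG' : u * G' = 1 := by rw [hu]; exact one_div_mul_cancel hG'pos.ne'
  clear_value G' u r s
  -- the comparison weights
  set c : Fin (m + 1) → ℝ := fun i =>
    if i = Fin.last m then 4 * s * r ^ (m + 1) else s * r ^ (i : ℕ) with hc
  have hc0 : ∀ i, 0 < c i := by
    intro i; rw [hc]; dsimp only
    split <;> positivity
  have h1 : ∀ i : Fin m, c i.castSucc = s * r ^ (i : ℕ) := by
    intro i
    rw [hc]; dsimp only
    rw [if_neg (by exact fun h => absurd (congrArg Fin.val h) (by simp [Fin.ext_iff]; omega))]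
    simp
  have h2 : c (Fin.last m) = 4 * s * r ^ (m + 1) := by rw [hc]; simp
  -- sum of c is at most s / (1 - r)
  have hcsum : ∑ i, c i ≤ s / (1 - r) := by
    rw [Fin.sum_univ_castSucc]
    rw [h2, Finset.sum_congr rfl fun i _ => h1 i]
    have hgeom : ∑ i : Fin m, s * r ^ (i : ℕ) = s * ((r ^ m - 1) / (r - 1)) := by
      rw [← Finset.mul_sum]
      congr 1
      rw [Fin.sum_univ_eq_sum_range (fun i => r ^ i), geom_sum_eq (ne_of_lt hr1)]
    rw [hgeom]
    have hrm : 0 < r ^ m := pow_pos hr0 m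
    have key : 4 * r ^ (m + 1) * (1 - r) ≤ r ^ m := by
      have : r ^ (m + 1) = r ^ m * r := pow_succ r m
      nlinarith [sq_nonneg (2 * r - 1)]
    have h1r : (0:ℝ) < 1 - r := by linarith
    rw [le_div_iff₀ h1r]
    have hne : r - 1 ≠ 0 := by linarith
    have e2 : (r ^ m - 1) / (r - 1) * (1 - r) = 1 - r ^ m := by
      field_simp
      ring
    have expand : (s * ((r ^ m - 1) / (r - 1)) + 4 * s * r ^ (m + 1)) * (1 - r)
        = s * ((r ^ m - 1) / (r - 1) * (1 - r)) + s * (4 * r ^ (m + 1) * (1 - r)) := by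
      ring
    rw [expand, e2]
    linarith [mul_le_mul_of_nonneg_left key hs0.le]
  have hlog2 : (0:ℝ) < Real.log 2 := Real.log_pos (by norm_num)
  -- entropy in nats
  have hHlog : ∑ i, p i * Real.log (p i) = -(H * Real.log 2) := by
    rw [hH, shannonEntropy, neg_mul, neg_neg, Finset.sum_mul]
    refine Finset.sum_congr rfl fun i _ => ?_
    rw [Real.logb]
    field_simp
  -- sum of i * p i
  have hGsum : ∑ i : Fin (m+1), ((i : ℕ) : ℝ) * p i = G - 1 := by
    have h0 : ∑ i : Fin (m+1), (((i : ℕ) : ℝ) + 1) * p i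
        = ∑ i : Fin (m+1), ((i : ℕ) : ℝ) * p i + ∑ i, p i := by
      rw [← Finset.sum_add_distrib]
      exact Finset.sum_congr rfl fun i _ => by ring
    have h3 : G = ∑ i : Fin (m+1), (((i : ℕ) : ℝ) + 1) * p i := by rw [hG, guessingEntropy]
    rw [hsum] at h0
    linarith
  -- logs of the comparison weights
  have hlogs : Real.log s = -u / 2 := by rw [hs, Real.log_exp]
  have hlogr : Real.log r = -u := by rw [hr, Real.log_exp]
  have hlog4 : Real.log 4 = 2 * Real.log 2 := by
    rw [show (4:ℝ) = 2 ^ 2 by norm_num, Real.log_pow]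
    push_cast; ring
  have hlogc : ∑ i, p i * Real.log (c i)
      = (∑ i, p i * (-u / 2 - ((i : ℕ) : ℝ) * u)) + pn * (Real.log 4 - u) := by
    rw [Fin.sum_univ_castSucc (f := fun i => p i * Real.log (c i)),
      Fin.sum_univ_castSucc (f := fun i => p i * (-u / 2 - ((i : ℕ) : ℝ) * u))]
    have hterm : ∀ i : Fin m, p i.castSucc * Real.log (c i.castSucc)
        = p i.castSucc * (-u / 2 - ((i.castSucc : ℕ) : ℝ) * u) := by
      intro i
      rw [h1 i, Real.log_mul hs0.ne' (pow_ne_zero _ hr0.ne'), Real.log_pow, hlogs, hlogr,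
        Fin.coe_castSucc]
      ring
    rw [Finset.sum_congr rfl fun i _ => hterm i]
    have hlast2 : p (Fin.last m) * Real.log (c (Fin.last m))
        = p (Fin.last m) * (-u / 2 - ((Fin.last m : ℕ) : ℝ) * u) + pn * (Real.log 4 - u) := by
      rw [h2, hpn, Real.log_mul (by positivity) (pow_ne_zero _ hr0.ne'),
        Real.log_mul (by norm_num) hs0.ne', Real.log_pow, hlogs, hlogr, Fin.val_last]
      push_cast
      ring
    rw [hlast2]
    ring
  -- evaluate the linear sum
  have hlin : ∑ i, p i * (-u / 2 - ((i : ℕ) : ℝ) * u) = -u / 2 - (G - 1) * u := by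
    have e : ∀ i : Fin (m+1), p i * (-u / 2 - ((i : ℕ) : ℝ) * u)
        = p i * (-u / 2) - (((i : ℕ) : ℝ) * p i) * u := fun i => by ring
    rw [Finset.sum_congr rfl fun i _ => e i, Finset.sum_sub_distrib,
      ← Finset.sum_mul, ← Finset.sum_mul, hsum, hGsum]
    ring
  -- Gibbs inequality with x i = c i / p i
  set x : Fin (m+1) → ℝ := fun i => c i / p i with hx
  have hx0 : ∀ i, 0 < x i := fun i => div_pos (hc0 i) (hpos i)
  have hgibbs := gibbs_log (Nat.succ_pos m) p x hpos hx0 hsum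
  have hpx : ∑ i, p i * x i = ∑ i, c i :=
    Finset.sum_congr rfl fun i _ => by
      rw [hx]; dsimp only
      rw [← mul_div_assoc]
      exact mul_div_cancel_left₀ (c i) (hpos i).ne'
  -- compute the left side of Gibbs
  have hLHS : ∑ i, p i * Real.log (x i)
      = H * Real.log 2 + 2 * pn * Real.log 2 - u * G' := by
    have e : ∀ i : Fin (m+1), p i * Real.log (x i)
        = p i * Real.log (c i) - p i * Real.log (p i) := by
      intro i
      rw [hx]; dsimp only
      rw [Real.log_div (hc0 i).ne' (hpos i).ne']
      ring
    rw [Finset.sum_congr rfl fun i _ => e i, Finset.sum_sub_distrib, hHlog, hlogc, hlin, hlog4]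
    rw [hG'def]
    ring
  -- bound s / (1 - r) ≤ G'
  have h1r : (0:ℝ) < 1 - r := by linarith
  have hsr : s / (1 - r) ≤ G' := by
    have hkey := key_exp_ineq u hu0
    have hseq : s = Real.exp (-(u/2)) := by rw [hs]; ring_nf
    have hG'eq : G' = 1 / u := by
      rw [hu]
      field_simp
    rw [hseq, hr, hG'eq]
    exact hkey
  -- combine
  have hchain : H * Real.log 2 + 2 * pn * Real.log 2 - 1 ≤ Real.log G' := by
    have l1 : Real.log (∑ i, p i * x i) ≤ Real.log (s / (1 - r)) := by
      rw [hpx]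
      exact Real.log_le_log (Finset.sum_pos (fun i _ => hc0 i) ⟨Fin.last m, Finset.mem_univ _⟩)
        hcsum
    have l2 : Real.log (s / (1 - r)) ≤ Real.log G' :=
      Real.log_le_log (div_pos hs0 h1r) hsr
    rw [hLHS, huG'] at hgibbs
    linarith
  have hfinal : 1 / Real.exp 1 * (2:ℝ) ^ (H + 2 * pn) ≤ G' := by
    have hpow : (2:ℝ) ^ (H + 2 * pn) = Real.exp (Real.log 2 * (H + 2 * pn)) :=
      Real.rpow_def_of_pos (by norm_num) _
    have hle : Real.exp (Real.log 2 * (H + 2 * pn)) ≤ Real.exp (1 + Real.log G') := by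
      apply Real.exp_le_exp.mpr
      linarith [hchain, mul_comm (Real.log 2) (H + 2 * pn)]
    rw [Real.exp_add, Real.exp_log hG'pos] at hle
    rw [hpow, div_mul_eq_mul_div, one_mul, div_le_iff₀ (Real.exp_pos 1)]
    linarith [hle]
  rw [ge_iff_le]
  linarith [hfinal]
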